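/- There exist υ₀ > 0 and ε* > 0 such that for every m ∈ [3,7], every ε ∈ (0,ε*), and every υ > 0 such that iυ is a root of the polynomial λ ↦ P₇(λ;m,ε), one has υ < υ₀. -/

import Mathlib

/-!
On the imaginary axis, `Im P₇(iυ) = -υ (a₀υ⁶ - a₂υ⁴ + a₄υ² - a₆)`. Always `a₀ ≥ 0`, and
`a₂ = ε(ε - 1)·a2Factor` where `a2Factor = 8(m + 1)(m + 2) > 0` at `ε = 0`; also `a₄ > 1` and
`a₆ < 2000²` at `ε = 0` for `m ∈ [3, 7]`. These strict inequalities persist for small `ε > 0`,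
uniformly in `m` by compactness of `[3, 7]`, so then `a₂ ≤ 0`, and at a root `iυ` the identity
forces `a₄υ² ≤ a₆`, hence `υ < 2000`.
-/

open Complex

/-- Coefficient a₀ of P₇. -/
noncomputable def a0 (m ε : ℝ) : ℝ := 2 ^ 11 * (ε - 1) ^ 4 * ε ^ 2

/-- Coefficient a₁ of P₇. -/
noncomputable def a1 (m ε : ℝ) : ℝ :=
  -2 ^ 11 * (ε ^ 2 - ε) ^ 2 *
    ((5 * ε ^ 2 - 2 * ε + 1) * m ^ 2 + 2 * (ε + 1) ^ 2 * m + 4)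

/-- Coefficient a₂ of P₇. -/
noncomputable def a2 (m ε : ℝ) : ℝ :=
  (ε ^ 2 - ε) *
    (ε * (59 * ε ^ 3 - 9 * ε ^ 2 + 17 * ε - 3) * m ^ 4 +
     4 * ε * (15 * ε ^ 3 + 15 * ε ^ 2 + 17 * ε + 1) * m ^ 3 +
     4 * (ε + 2) * (ε ^ 3 + 9 * ε ^ 2 + 5 * ε + 1) * m ^ 2 -
     8 * (2 * ε ^ 3 - 3 * ε ^ 2 - 4 * ε - 3) * m - 8 * (ε - 1) * (ε + 2))

/-- Coefficient a₃ of P₇. -/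
noncomputable def a3 (m ε : ℝ) : ℝ :=
  2 ^ 7 *
    (-(ε ^ 2) * (5 * ε - 1) * (9 * ε ^ 3 + ε ^ 2 + 7 * ε - 1) * m ^ 6 -
     2 * ε ^ 2 * (59 * ε ^ 4 - 8 * ε ^ 3 + 74 * ε ^ 2 + 8 * ε - 5) * m ^ 5 -
     4 * ε * (4 * ε ^ 5 + 27 * ε ^ 4 + 24 * ε ^ 3 + 37 * ε ^ 2 + 6 * ε - 2) * m ^ 4 +
     4 * ε * (4 * ε ^ 5 + 20 * ε ^ 4 - 31 * ε ^ 3 - 23 * ε ^ 2 - 33 * ε - 1) * m ^ 3 +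
     4 * (9 * ε ^ 5 + 27 * ε ^ 4 - 15 * ε ^ 3 - 24 * ε ^ 2 - 12 * ε - 1) * m ^ 2 +
     4 * (ε ^ 4 + 17 * ε ^ 3 - 7 * ε ^ 2 - 9 * ε - 2) * m -
     4 * (ε - 1) ^ 2 * (2 * ε + 1))

/-- Coefficient a₄ of P₇. -/
noncomputable def a4 (m ε : ℝ) : ℝ :=
  2 ^ 3 *
    (ε ^ 2 * (9 * ε - 1) ^ 2 * (ε - 1) ^ 2 * m ^ 8 +
     8 * ε ^ 2 * (ε - 1) * (45 * ε ^ 3 + 5 * ε ^ 2 - 21 * ε + 3) * m ^ 7 +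
     8 * ε * (21 * ε ^ 5 - 58 * ε ^ 4 - 84 * ε ^ 3 - 32 * ε ^ 2 + 27 * ε - 2) * m ^ 6 -
     16 * ε * (34 * ε ^ 5 + 42 * ε ^ 4 + 113 * ε ^ 3 + 81 * ε ^ 2 - 7 * ε - 7) * m ^ 5 -
     16 * (7 * ε ^ 6 + 96 * ε ^ 5 + 75 * ε ^ 4 + 176 * ε ^ 3 + 42 * ε ^ 2 - 10 * ε - 2) * m ^ 4 +
     16 * ε * (6 * ε ^ 4 - 75 * ε ^ 3 - 65 * ε ^ 2 - 117 * ε - 5) * m ^ 3 +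
     16 * (29 * ε ^ 4 - 7 * ε ^ 3 - 48 * ε ^ 2 - 31 * ε - 7) * m ^ 2 +
     32 * (ε - 1) * (7 * ε ^ 2 + 14 * ε + 3) * m - 16 * (ε - 1) ^ 2)

/-- Coefficient a₅ of P₇. -/
noncomputable def a5 (m ε : ℝ) : ℝ :=
  2 ^ 5 * m *
    (ε ^ 2 * (ε - 1) ^ 2 * (9 * ε ^ 2 + ε - 2) * m ^ 7 +
     (ε ^ 2 - ε) * (38 * ε ^ 4 + 46 * ε ^ 3 - 39 * ε ^ 2 + 3) * m ^ 6 +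
     (36 * ε ^ 6 + 33 * ε ^ 5 - 123 * ε ^ 4 - 95 * ε ^ 3 + 54 * ε ^ 2 - 1) * m ^ 5 -
     (8 * ε ^ 6 - 8 * ε ^ 5 + 169 * ε ^ 4 + 233 * ε ^ 3 + 25 * ε ^ 2 - 41 * ε - 2) * m ^ 4 -
     (60 * ε ^ 5 + 110 * ε ^ 4 + 320 * ε ^ 3 + 129 * ε ^ 2 - 22 * ε - 21) * m ^ 3 -
     4 * (16 * ε ^ 4 + 37 * ε ^ 3 + 41 * ε ^ 2 + 7 * ε - 5) * m ^ 2 +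
     2 * (4 * ε ^ 3 - 37 * ε ^ 2 - 10 * ε - 5) * m + 4 * (5 * ε ^ 2 - 2 * ε - 3))

/-- Coefficient a₆ of P₇. -/
noncomputable def a6 (m ε : ℝ) : ℝ :=
  2 ^ 3 * m *
    (2 * ε ^ 2 * (ε - 1) ^ 2 * (ε + 1) * (2 * ε - 1) * m ^ 7 +
     (ε ^ 2 - ε) * (16 * ε ^ 4 + 58 * ε ^ 3 - 19 * ε ^ 2 - 10 * ε + 3) * m ^ 6 +
     (16 * ε ^ 6 + 72 * ε ^ 5 - 39 * ε ^ 4 - 171 * ε ^ 3 + 42 * ε ^ 2 + 17 * ε - 1) * m ^ 5 +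
     2 * (20 * ε ^ 5 - 12 * ε ^ 4 - 113 * ε ^ 3 - 69 * ε ^ 2 + 41 * ε + 5) * m ^ 4 -
     (2 * ε + 1) * (18 * ε ^ 3 + 81 * ε ^ 2 + 80 * ε - 51) * m ^ 3 -
     4 * (28 * ε ^ 3 + 31 * ε ^ 2 + 20 * ε - 15) * m ^ 2 -
     4 * (11 * ε - 3) * (ε + 1) * m - 8 * (1 - ε))

/-- Coefficient a₇ of P₇. -/
noncomputable def a7 (m ε : ℝ) : ℝ :=
  2 ^ 4 * (m ^ 2 + m ^ 3) *
    (ε ^ 2 * (ε ^ 2 - 1) * (2 * ε - 1) * m ^ 4 +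
     ε * (2 * ε - 1) * (3 * ε ^ 2 - 3 * ε - 2) * m ^ 3 +
     (2 * ε ^ 4 - 13 * ε ^ 2 + 4 * ε + 1) * m ^ 2 -
     3 * (2 * ε - 1) * (ε + 1) * m + 2 * (1 - 2 * ε))

/-- The seventh-order polynomial P₇(λ;m,ε). -/
noncomputable def P7 (m ε : ℝ) (l : ℂ) : ℂ :=
  (a0 m ε : ℂ) * l ^ 7 + (a1 m ε : ℂ) * l ^ 6 + (a2 m ε : ℂ) * l ^ 5 +
  (a3 m ε : ℂ) * l ^ 4 + (a4 m ε : ℂ) * l ^ 3 + (a5 m ε : ℂ) * l ^ 2 +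
  (a6 m ε : ℂ) * l + (a7 m ε : ℂ)

open Filter Topology Set

theorem IsCompact.eventually_forall_lt {X Y α : Type*} [TopologicalSpace X] [TopologicalSpace Y]
    [TopologicalSpace α] [LinearOrder α] [OrderClosedTopology α] {K : Set Y} (hK : IsCompact K)
    {f g : X × Y → α} (hf : Continuous f) (hg : Continuous g) {x₀ : X}
    (h : ∀ y ∈ K, f (x₀, y) < g (x₀, y)) : ∀ᶠ x in 𝓝 x₀, ∀ y ∈ K, f (x, y) < g (x, y) :=
  hK.eventually_forall_of_forall_eventually fun y hy =>
    hf.continuousAt.eventually_lt hg.continuousAt (h y hy)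

theorem mul_sq_le_of_odd_septic_eq_zero {a₀ a₂ a₄ a₆ υ : ℝ} (ha₀ : 0 ≤ a₀) (ha₂ : a₂ ≤ 0)
    (hυ : 0 < υ) (h : -a₀ * υ ^ 7 + a₂ * υ ^ 5 - a₄ * υ ^ 3 + a₆ * υ = 0) :
    a₄ * υ ^ 2 ≤ a₆ := by
  have h' : υ * (a₀ * υ ^ 6 - a₂ * υ ^ 4 + a₄ * υ ^ 2 - a₆) = 0 := by linear_combination -h
  have := (mul_eq_zero.1 h').resolve_left hυ.ne'
  nlinarith [mul_nonneg ha₀ (pow_nonneg hυ.le 6), mul_nonneg (neg_nonneg.2 ha₂) (pow_nonneg hυ.le 4)]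

theorem im_P7_I_mul (m ε υ : ℝ) :
    (P7 m ε (I * υ)).im = -a0 m ε * υ ^ 7 + a2 m ε * υ ^ 5 - a4 m ε * υ ^ 3 + a6 m ε * υ := by
  simp only [P7, pow_succ, pow_zero, one_mul, add_im, mul_im, ofReal_re, mul_re, I_re, zero_mul,
    I_im, ofReal_im, mul_zero, sub_self, zero_add, zero_sub, add_zero, neg_mul, sub_neg_eq_add,
    mul_neg, neg_zero, add_left_inj]
  ring

theorem a0_nonneg (m ε : ℝ) : 0 ≤ a0 m ε := by unfold a0; positivity

noncomputable def a2Factor (m ε : ℝ) : ℝ :=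
  ε * (59 * ε ^ 3 - 9 * ε ^ 2 + 17 * ε - 3) * m ^ 4 +
    4 * ε * (15 * ε ^ 3 + 15 * ε ^ 2 + 17 * ε + 1) * m ^ 3 +
    4 * (ε + 2) * (ε ^ 3 + 9 * ε ^ 2 + 5 * ε + 1) * m ^ 2 -
    8 * (2 * ε ^ 3 - 3 * ε ^ 2 - 4 * ε - 3) * m - 8 * (ε - 1) * (ε + 2)

theorem a2_eq_mul_a2Factor (m ε : ℝ) : a2 m ε = (ε ^ 2 - ε) * a2Factor m ε := rfl

theorem a2Factor_zero_pos {m : ℝ} (hm : 0 ≤ m) : 0 < a2Factor m 0 := by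
  norm_num [a2Factor]; nlinarith

theorem one_lt_a4_zero {m : ℝ} (hm : 3 ≤ m) : 1 < a4 m 0 := by
  have hm2 : 9 ≤ m ^ 2 := by nlinarith
  norm_num [a4]; nlinarith [mul_le_mul_of_nonneg_left hm2 (sq_nonneg m)]

theorem a6_zero_lt {m : ℝ} (hm₀ : 0 ≤ m) (hm₇ : m ≤ 7) : a6 m 0 < 2000 ^ 2 := by
  have hpow (k : ℕ) : m ^ k ≤ 7 ^ k := pow_le_pow_left₀ hm₀ hm₇ k
  norm_num [a6]
  nlinarith [hpow 2, hpow 3, hpow 4, hpow 5, pow_nonneg hm₀ 6]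

theorem eventually_coeff_bounds :
    ∀ᶠ ε in 𝓝[>] (0 : ℝ), ∀ m ∈ Icc (3 : ℝ) 7, a2 m ε ≤ 0 ∧ 1 < a4 m ε ∧ a6 m ε < 2000 ^ 2 := by
  have hK : IsCompact (Icc (3 : ℝ) 7) := isCompact_Icc
  have h2 : ∀ᶠ ε in 𝓝 (0 : ℝ), ∀ m ∈ Icc (3 : ℝ) 7, 0 < a2Factor m ε :=
    hK.eventually_forall_lt (f := fun _ => 0) (g := fun p => a2Factor p.2 p.1)
      continuous_const (by unfold a2Factor; fun_prop)
      fun m hm => a2Factor_zero_pos (by linarith [hm.1])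
  have h4 : ∀ᶠ ε in 𝓝 (0 : ℝ), ∀ m ∈ Icc (3 : ℝ) 7, 1 < a4 m ε :=
    hK.eventually_forall_lt (f := fun _ => 1) (g := fun p => a4 p.2 p.1)
      continuous_const (by unfold a4; fun_prop) fun m hm => one_lt_a4_zero hm.1
  have h6 : ∀ᶠ ε in 𝓝 (0 : ℝ), ∀ m ∈ Icc (3 : ℝ) 7, a6 m ε < 2000 ^ 2 :=
    hK.eventually_forall_lt (f := fun p => a6 p.2 p.1) (g := fun _ => 2000 ^ 2)
      (by unfold a6; fun_prop) continuous_const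
      fun m hm => a6_zero_lt (by linarith [hm.1]) hm.2
  filter_upwards [self_mem_nhdsWithin, nhdsWithin_le_nhds (eventually_lt_nhds one_pos),
    nhdsWithin_le_nhds h2, nhdsWithin_le_nhds h4, nhdsWithin_le_nhds h6]
    with ε (hε₀ : 0 < ε) hε₁ h2ε h4ε h6ε m hm
  refine ⟨?_, h4ε m hm, h6ε m hm⟩
  rw [a2_eq_mul_a2Factor]
  exact mul_nonpos_of_nonpos_of_nonneg (by nlinarith) (h2ε m hm).le

/-- there exist υ₀ > 0 and ε* > 0 such that for every m ∈ [3,7],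
every ε ∈ (0,ε*) and every υ > 0 with P₇(iυ;m,ε) = 0, one has υ < υ₀. -/
theorem imaginary_roots_bounded :
    ∃ υ₀ > (0:ℝ), ∃ εs > (0:ℝ),
      ∀ m ∈ Set.Icc (3:ℝ) 7, ∀ ε ∈ Set.Ioo (0:ℝ) εs, ∀ υ : ℝ, 0 < υ →
        P7 m ε (Complex.I * υ) = 0 → υ < υ₀ := by
  obtain ⟨εs, hεs, hsub⟩ := mem_nhdsGT_iff_exists_Ioo_subset.1 eventually_coeff_bounds
  refine ⟨2000, by norm_num, εs, hεs, fun m hm ε hε υ hυ hP => ?_⟩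
  obtain ⟨ha2, ha4, ha6⟩ := hsub hε m hm
  have hroot : a4 m ε * υ ^ 2 ≤ a6 m ε :=
    mul_sq_le_of_odd_septic_eq_zero (a0_nonneg m ε) ha2 hυ
      (by rw [← im_P7_I_mul, hP, zero_im])
  have hsq : υ ^ 2 < 2000 ^ 2 := by nlinarith
  exact lt_of_pow_lt_pow_left₀ 2 (by norm_num) hsq
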